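/- arXiv:1901.01090 — 2 statements merged into one kernel-verified Lean document; each statement's English description precedes it below -/
import Mathlib

section
/- For every simple graph G and all d, d' ≥ 1, there exists a graph homomorphism (G/d') ⋉ d → (G ⋉ d)/d'. -/
open SimpleGraph

universe u v

/-- The join `G + H` of two simple graphs. -/
def graphJoin {α : Type u} {β : Type v} (G : SimpleGraph α) (H : SimpleGraph β) :
    SimpleGraph (α ⊕ β) where
  Adj x y :=
    match x, y with
    | Sum.inl a, Sum.inl a' => G.Adj a a'
    | Sum.inr b, Sum.inr b' => H.Adj b b'
    | Sum.inl _, Sum.inr _ => True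
    | Sum.inr _, Sum.inl _ => True
  symm := by
    constructor
    rintro (a | b) (a' | b') h
    · exact G.adj_symm h
    · trivial
    · trivial
    · exact H.adj_symm h
  loopless := by
    constructor
    rintro (a | b) h
    · exact G.irrefl h
    · exact H.irrefl h

/-- The disjunctive product `G * H`. -/
def disjProd {α : Type u} {β : Type v} (G : SimpleGraph α) (H : SimpleGraph β) :
    SimpleGraph (α × β) where
  Adj p q := G.Adj p.1 q.1 ∨ H.Adj p.2 q.2
  symm := ⟨fun p q h => h.imp (fun h' => G.adj_symm h') (fun h' => H.adj_symm h')⟩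
  loopless := ⟨fun p h => h.elim (fun h' => G.irrefl h') (fun h' => H.irrefl h')⟩

/-- The lexicographic product `G ⋉ H`. -/
def lexProd {α : Type u} {β : Type v} (G : SimpleGraph α) (H : SimpleGraph β) :
    SimpleGraph (α × β) where
  Adj p q := G.Adj p.1 q.1 ∨ (p.1 = q.1 ∧ H.Adj p.2 q.2)
  symm := ⟨fun p q h => h.imp (fun h' => G.adj_symm h') (fun h' => ⟨h'.1.symm, H.adj_symm h'.2⟩)⟩
  loopless := ⟨fun p h => h.elim (fun h' => G.irrefl h') (fun h' => H.irrefl h'.2)⟩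

/-- The `d`-fold blowup `G ⋉ d`, i.e. the lexicographic product `G ⋉ K_d`. -/
def blowup {α : Type u} (G : SimpleGraph α) (d : ℕ) : SimpleGraph (α × Fin d) :=
  lexProd G (⊤ : SimpleGraph (Fin d))

/-- The `d`-fractionalization `G/d`: the graph of `d`-cliques of `G`, with two
`d`-cliques adjacent iff they are disjoint and pairwise adjacent. -/
def fracGraph {α : Type u} (G : SimpleGraph α) (d : ℕ) :
    SimpleGraph {S : Finset α // S.card = d ∧ G.IsClique (S : Set α)} where
  Adj S T := S ≠ T ∧ Disjoint S.val T.val ∧ ∀ a ∈ S.val, ∀ b ∈ T.val, G.Adj a b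
  symm := by
    constructor
    rintro S T ⟨hne, hd, hadj⟩
    exact ⟨hne.symm, hd.symm, fun b hb a ha => (hadj a ha b hb).symm⟩
  loopless := ⟨fun S h => h.1 rfl⟩

/-- The `n`-fold disjunctive power `G^{*n}`. -/
def disjPow {α : Type u} (G : SimpleGraph α) (n : ℕ) :
    SimpleGraph (Fin n → α) where
  Adj f g := ∃ i, G.Adj (f i) (g i)
  symm := ⟨fun f g ⟨i, h⟩ => ⟨i, h.symm⟩⟩
  loopless := ⟨fun f ⟨i, h⟩ => G.irrefl h⟩

/-- A semiring family of graphs. -/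
structure SemiringFamily where
  V : ℕ → Type u
  F : ∀ n, SimpleGraph (V n)
  isEmpty_zero : IsEmpty (V 0)
  nonempty_one : Nonempty (V 1)
  add_hom : ∀ n m : ℕ, Nonempty (graphJoin (F n) (F m) →g F (n + m))
  mul_hom : ∀ n m : ℕ, Nonempty (disjProd (F n) (F m) →g F (n * m))

/-- The `F`-number: the least `n` such that `G → F_n`. -/
noncomputable def etaF (F : SemiringFamily.{u}) {α : Type v} (G : SimpleGraph α) : ℕ :=
  sInf {n : ℕ | Nonempty (G →g F.F n)}

/-- The fractional `F`-number. -/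
noncomputable def etaFrac (F : SemiringFamily.{u}) {α : Type v} (G : SimpleGraph α) : ℝ :=
  sInf {x : ℝ | ∃ n d : ℕ, 1 ≤ d ∧ Nonempty (G →g fracGraph (F.F n) d) ∧ x = (n : ℝ) / d}

/-- The asymptotic `F`-number. -/
noncomputable def etaAsymp (F : SemiringFamily.{u}) {α : Type v} (G : SimpleGraph α) : ℝ :=
  sInf {x : ℝ | ∃ n : ℕ, 1 ≤ n ∧ x = (etaF F (disjPow G n) : ℝ) ^ ((1 : ℝ) / n)}

/-- The orthogonal complement of a set of vertices. -/
def perp {α : Type u} (G : SimpleGraph α) (S : Set α) : Set α :=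
  {v | ∀ s ∈ S, G.Adj v s}

/-- A flat is a set of vertices with `S^{⊥⊥} = S`. -/
def IsFlat {α : Type u} (G : SimpleGraph α) (S : Set α) : Prop :=
  perp G (perp G S) = S

/-- Homomorphic equivalence of two graphs. -/
def HomEquiv {α : Type u} {β : Type v} (G : SimpleGraph α) (H : SimpleGraph β) : Prop :=
  Nonempty (G →g H) ∧ Nonempty (H →g G)

/-- A linear-like semiring family: every flat of `F_n` induces a subgraph with some
clique number `k`, homomorphically equivalent to `F_k`. -/
structure LinearLikeFamily extends SemiringFamily where
  linearLike : ∀ n (S : Set (V n)), IsFlat (F n) S →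
    ∃ k : ℕ, (∃ s : Finset S, ((F n).induce S).IsNClique k s) ∧
      (∀ s : Finset S, ¬ ((F n).induce S).IsNClique (k + 1) s) ∧
      HomEquiv ((F n).induce S) (F k)

section LexProdFracGraph

variable {α : Type u} {β : Type v} {G : SimpleGraph α} {d : ℕ}

-- Disjointness and `S ≠ T` are implied: a common vertex would be a loop, and `S` is nonempty.
theorem fracGraph_adj_iff (hd : 0 < d)
    {S T : {S : Finset α // S.card = d ∧ G.IsClique (S : Set α)}} :
    (fracGraph G d).Adj S T ↔ ∀ a ∈ S.val, ∀ b ∈ T.val, G.Adj a b := by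
  refine ⟨fun h => h.2.2, fun h => ?_⟩
  have hdisj : Disjoint S.val T.val :=
    Finset.disjoint_left.mpr fun a haS haT => G.irrefl (h a haS a haT)
  obtain ⟨a, ha⟩ := Finset.card_pos.mp (S.prop.1 ▸ hd)
  refine ⟨fun hST => ?_, hdisj, h⟩
  exact Finset.disjoint_left.mp hdisj ha (hST ▸ ha)

theorem SimpleGraph.IsClique.map_sectL_lexProd {S : Set α} (hS : G.IsClique S)
    (H : SimpleGraph β) (w : β) :
    (lexProd G H).IsClique (Function.Embedding.sectL α w '' S) := by
  rintro _ ⟨a, ha, rfl⟩ _ ⟨b, hb, rfl⟩ hne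
  exact Or.inl (hS ha hb fun hab => hne (hab ▸ rfl))

def lexProdFracGraphHom (hd : 0 < d) (H : SimpleGraph β) :
    lexProd (fracGraph G d) H →g fracGraph (lexProd G H) d where
  toFun p := ⟨p.1.val.map (Function.Embedding.sectL α p.2),
    by rw [Finset.card_map, p.1.prop.1],
    by simpa using IsClique.map_sectL_lexProd p.1.prop.2 H p.2⟩
  map_rel' := by
    rintro ⟨S, w⟩ ⟨T, w'⟩ hadj
    rw [fracGraph_adj_iff hd]
    simp only [Finset.mem_map, Function.Embedding.sectL_apply]
    rintro _ ⟨a, ha, rfl⟩ _ ⟨b, hb, rfl⟩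
    rcases hadj with hST | ⟨rfl, hww'⟩
    · exact Or.inl (hST.2.2 a ha b hb)
    · by_cases hab : a = b
      · exact Or.inr ⟨hab, hww'⟩
      · exact Or.inl (S.prop.2 ha hb hab)

end LexProdFracGraph

theorem blowup_fracGraph_hom_general {α : Type u} (G : SimpleGraph α) (d d' : ℕ)
    (hd' : 1 ≤ d') :
    Nonempty (blowup (fracGraph G d') d →g fracGraph (blowup G d) d') :=
  ⟨lexProdFracGraphHom hd' ⊤⟩

/-- There is a graph homomorphism `(G/d') ⋉ d → (G ⋉ d)/d'`. -/
theorem blowup_fracGraph_hom {α : Type u} (G : SimpleGraph α) (d d' : ℕ)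
    (hd : 1 ≤ d) (hd' : 1 ≤ d') :
    Nonempty (blowup (fracGraph G d') d →g fracGraph (blowup G d) d') :=
  blowup_fracGraph_hom_general G d d' hd'
end

section
/- Let (F_n) be a semiring family of graphs and let G and H be finite simple graphs. Then the fractional F-number is subadditive under joins: η_F^frac(G + H) ≤ η_F^frac(G) + η_F^frac(H). -/
open SimpleGraph

universe u v

/-! If `G → F_n/d` and `H → F_m/e`, then `G + H → F_{ne+md}/(de)`: a `d`-clique `S` of `F_n`
becomes the `de`-clique `S × C` of `F_n * F_e → F_{ne}` for a fixed `e`-clique `C` of `F_e`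
(it exists since `K_e → F_e`), symmetrically for `H`, and the two sides land in the join
`F_{ne} + F_{md} → F_{ne+md}`. So `n/d + m/e` is an admissible ratio for `G + H`. If `G` or `H`
admits no ratio at all, neither does `G + H`, whose `etaFrac` is then the junk value `sInf ∅ = 0`. -/

open scoped Pointwise

section

variable {α β γ : Type*} {A : SimpleGraph α} {B : SimpleGraph β} {C : SimpleGraph γ}

lemma SimpleGraph.Hom.injOn_of_isClique (φ : A →g B) {s : Set α} (hs : A.IsClique s) :
    Set.InjOn φ s := by
  intro x hx y hy hxy
  by_contra hne
  exact B.irrefl (hxy ▸ φ.map_adj (hs hx hy hne))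

lemma SimpleGraph.IsNClique.image_hom [DecidableEq β] {d : ℕ} {s : Finset α}
    (hs : A.IsNClique d s) (φ : A →g B) : B.IsNClique d (s.image φ) where
  isClique := by
    rw [Finset.coe_image]
    rintro _ ⟨x, hx, rfl⟩ _ ⟨y, hy, rfl⟩ hne
    exact φ.map_adj (hs.isClique hx hy (ne_of_apply_ne φ hne))
  card_eq := by rw [Finset.card_image_of_injOn (φ.injOn_of_isClique hs.isClique), hs.card_eq]

lemma disjProd_isNClique_product {d e : ℕ} {s : Finset α} {t : Finset β}
    (hs : A.IsNClique d s) (ht : B.IsNClique e t) : (disjProd A B).IsNClique (d * e) (s ×ˢ t) where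
  isClique := by
    rintro ⟨a, b⟩ hab ⟨a', b'⟩ hab' hne
    simp only [Finset.coe_product, Set.mem_prod, Finset.mem_coe] at hab hab'
    rcases eq_or_ne a a' with rfl | ha
    · exact Or.inr (ht.isClique hab.2 hab'.2 fun hb => hne (by rw [hb]))
    · exact Or.inl (hs.isClique hab.1 hab'.1 ha)
  card_eq := by rw [Finset.card_product, hs.card_eq, ht.card_eq]

def disjProdLeft (B : SimpleGraph β) (b : β) : A →g disjProd A B :=
  ⟨fun a => (a, b), Or.inl⟩

def graphJoin.lift (f : A →g C) (g : B →g C) (hfg : ∀ a b, C.Adj (f a) (g b)) :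
    graphJoin A B →g C where
  toFun := Sum.elim f g
  map_rel' := by
    rintro (a | b) (a' | b') h
    · exact f.map_adj h
    · exact hfg a b'
    · exact (hfg a' b).symm
    · exact g.map_adj h

def graphJoin.inl : A →g graphJoin A B := ⟨Sum.inl, id⟩

def graphJoin.inr : B →g graphJoin A B := ⟨Sum.inr, id⟩

def graphJoin.map {α' β' : Type*} {A' : SimpleGraph α'} {B' : SimpleGraph β'}
    (f : A →g A') (g : B →g B') : graphJoin A B →g graphJoin A' B' :=
  graphJoin.lift (graphJoin.inl.comp f) (graphJoin.inr.comp g) fun _ _ => trivial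

namespace fracGraph

variable {d e : ℕ}

lemma isNClique (S : {S : Finset α // S.card = d ∧ A.IsClique (S : Set α)}) :
    A.IsNClique d S.val :=
  ⟨S.2.2, S.2.1⟩

def mk (s : Finset α) (hs : A.IsNClique d s) :
    {S : Finset α // S.card = d ∧ A.IsClique (S : Set α)} :=
  ⟨s, hs.card_eq, hs.isClique⟩

lemma adj_iff {S T : {S : Finset α // S.card = d ∧ A.IsClique (S : Set α)}} :
    (fracGraph A d).Adj S T ↔ 0 < d ∧ ∀ a ∈ S.val, ∀ b ∈ T.val, A.Adj a b := by
  constructor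
  · rintro ⟨hne, -, hadj⟩
    refine ⟨Nat.pos_of_ne_zero fun hd => hne ?_, hadj⟩
    have hS : S.val = ∅ := Finset.card_eq_zero.mp (S.2.1.trans hd)
    have hT : T.val = ∅ := Finset.card_eq_zero.mp (T.2.1.trans hd)
    exact Subtype.ext (hS.trans hT.symm)
  · rintro ⟨hd, hadj⟩
    have hdisj : Disjoint S.val T.val :=
      Finset.disjoint_left.mpr fun a haS haT => A.irrefl (hadj a haS a haT)
    obtain ⟨a, ha⟩ := Finset.card_pos.mp (S.2.1 ▸ hd)
    exact ⟨fun hST => Finset.disjoint_left.mp hdisj ha (hST ▸ ha), hdisj, hadj⟩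

def map [DecidableEq β] (φ : A →g B) (d : ℕ) : fracGraph A d →g fracGraph B d where
  toFun S := mk (S.val.image φ) ((isNClique S).image_hom φ)
  map_rel' {S T} h := by
    rw [adj_iff] at h ⊢
    refine ⟨h.1, ?_⟩
    simp only [mk, Finset.mem_image]
    rintro _ ⟨a, ha, rfl⟩ _ ⟨b, hb, rfl⟩
    exact φ.map_adj (h.2 a ha b hb)

def prod (hd : 0 < d) (he : 0 < e) :
    disjProd (fracGraph A d) (fracGraph B e) →g fracGraph (disjProd A B) (d * e) where
  toFun ST :=
    mk (ST.1.val ×ˢ ST.2.val) (disjProd_isNClique_product (isNClique ST.1) (isNClique ST.2))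
  map_rel' {ST ST'} h := by
    rw [adj_iff]
    refine ⟨Nat.mul_pos hd he, ?_⟩
    simp only [mk, Finset.mem_product]
    rintro ⟨a, b⟩ hab ⟨a', b'⟩ hab'
    rcases h with h | h
    · exact Or.inl ((adj_iff.mp h).2 a hab.1 a' hab'.1)
    · exact Or.inr ((adj_iff.mp h).2 b hab.2 b' hab'.2)

def join [DecidableEq α] [DecidableEq β] (hd : 0 < d) :
    graphJoin (fracGraph A d) (fracGraph B d) →g fracGraph (graphJoin A B) d :=
  graphJoin.lift (map graphJoin.inl d) (map graphJoin.inr d) fun S T => by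
    rw [adj_iff]
    refine ⟨hd, ?_⟩
    simp only [map, mk, RelHom.coeFn_mk, Finset.mem_image]
    rintro _ ⟨a, -, rfl⟩ _ ⟨b, -, rfl⟩
    trivial

end fracGraph

def graphJoin.fromTop :
    (⊤ : SimpleGraph (α ⊕ β)) →g graphJoin (⊤ : SimpleGraph α) (⊤ : SimpleGraph β) where
  toFun := id
  map_rel' := by
    rintro (a | b) (a' | b') h
    · exact fun ha => h (congrArg Sum.inl ha)
    · trivial
    · trivial
    · exact fun hb => h (congrArg Sum.inr hb)

namespace SemiringFamily

variable (F : SemiringFamily) {G : SimpleGraph α} {H : SimpleGraph β} {n m d e : ℕ}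

lemma nonempty_topHom : ∀ m, Nonempty ((⊤ : SimpleGraph (Fin m)) →g F.F m)
  | 0 => ⟨⟨Fin.elim0, fun {a} => a.elim0⟩⟩
  | m + 1 => by
    obtain ⟨φ⟩ := nonempty_topHom m
    obtain ⟨v⟩ := F.nonempty_one
    obtain ⟨σ⟩ := F.add_hom m 1
    let ψ : (⊤ : SimpleGraph (Fin 1)) →g F.F 1 :=
      ⟨fun _ => v, fun {a b} h => (h (Subsingleton.elim a b)).elim⟩
    exact ⟨σ.comp ((graphJoin.map φ ψ).comp
      (graphJoin.fromTop.comp (Iso.completeGraph finSumFinEquiv.symm).toHom))⟩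

lemma exists_isNClique (m : ℕ) : ∃ s : Finset (F.V m), (F.F m).IsNClique m s := by
  obtain ⟨φ⟩ := F.nonempty_topHom m
  have hs := isNClique_map_copy_top ⟨φ, Hom.injective_of_top_hom φ⟩
  rw [Fintype.card_fin] at hs
  exact ⟨_, hs⟩

lemma nonempty_fracGraph_mulHom (hd : 0 < d) (he : 0 < e) :
    Nonempty (fracGraph (F.F n) d →g fracGraph (F.F (n * e)) (d * e)) := by
  classical
  obtain ⟨s, hs⟩ := F.exists_isNClique e
  obtain ⟨μ⟩ := F.mul_hom n e
  exact ⟨(fracGraph.map μ _).comp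
    ((fracGraph.prod hd he).comp (disjProdLeft _ (fracGraph.mk s hs)))⟩

lemma nonempty_join_hom (hd : 0 < d) (he : 0 < e)
    (f : G →g fracGraph (F.F n) d) (g : H →g fracGraph (F.F m) e) :
    Nonempty (graphJoin G H →g fracGraph (F.F (n * e + m * d)) (d * e)) := by
  classical
  obtain ⟨φ⟩ := F.nonempty_fracGraph_mulHom (n := n) hd he
  obtain ⟨ψ⟩ := F.nonempty_fracGraph_mulHom (n := m) he hd
  rw [Nat.mul_comm e d] at ψ
  obtain ⟨σ⟩ := F.add_hom (n * e) (m * d)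
  exact ⟨(fracGraph.map σ _).comp
    ((fracGraph.join (Nat.mul_pos hd he)).comp (graphJoin.map (φ.comp f) (ψ.comp g)))⟩

end SemiringFamily

section FracRatios

variable (F : SemiringFamily)

def fracRatios (G : SimpleGraph α) : Set ℝ :=
  {x : ℝ | ∃ n d : ℕ, 1 ≤ d ∧ Nonempty (G →g fracGraph (F.F n) d) ∧ x = (n : ℝ) / d}

variable {G : SimpleGraph α} {H : SimpleGraph β}

lemma etaFrac_eq_sInf_fracRatios : etaFrac F G = sInf (fracRatios F G) := rfl

lemma fracRatios_nonneg : ∀ x ∈ fracRatios F G, 0 ≤ x := by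
  rintro _ ⟨n, d, -, -, rfl⟩
  positivity

lemma etaFrac_nonneg : 0 ≤ etaFrac F G :=
  Real.sInf_nonneg (fracRatios_nonneg F)

lemma fracRatios_subset_of_hom {G' : SimpleGraph β} (φ : G →g G') :
    fracRatios F G' ⊆ fracRatios F G := by
  rintro _ ⟨n, d, hd, ⟨f⟩, rfl⟩
  exact ⟨n, d, hd, ⟨f.comp φ⟩, rfl⟩

lemma etaFrac_eq_zero_of_hom {G' : SimpleGraph β} (φ : G →g G') (hG : fracRatios F G = ∅) :
    etaFrac F G' = 0 := by
  rw [etaFrac_eq_sInf_fracRatios, Set.subset_eq_empty (fracRatios_subset_of_hom F φ) hG,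
    Real.sInf_empty]

lemma add_fracRatios_subset_join :
    fracRatios F G + fracRatios F H ⊆ fracRatios F (graphJoin G H) := by
  rintro _ ⟨_, ⟨n, d, hd, ⟨f⟩, rfl⟩, _, ⟨m, e, he, ⟨g⟩, rfl⟩, rfl⟩
  refine ⟨n * e + m * d, d * e, Nat.mul_pos hd he, F.nonempty_join_hom hd he f g, ?_⟩
  have hd' : (d : ℝ) ≠ 0 := by positivity
  have he' : (e : ℝ) ≠ 0 := by positivity
  push_cast
  field_simp

end FracRatios

end

theorem etaFrac_join_subadditive_general (F : SemiringFamily.{u}) {α : Type v} {β : Type w}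
    (G : SimpleGraph α) (H : SimpleGraph β) :
    etaFrac F (graphJoin G H) ≤ etaFrac F G + etaFrac F H := by
  have hsum_nonneg := add_nonneg (etaFrac_nonneg F (G := G)) (etaFrac_nonneg F (G := H))
  rcases (fracRatios F G).eq_empty_or_nonempty with hG | hG
  · rwa [etaFrac_eq_zero_of_hom F graphJoin.inl hG]
  rcases (fracRatios F H).eq_empty_or_nonempty with hH | hH
  · rwa [etaFrac_eq_zero_of_hom F graphJoin.inr hH]
  calc etaFrac F (graphJoin G H)
      ≤ sInf (fracRatios F G + fracRatios F H) :=
        csInf_le_csInf ⟨0, fracRatios_nonneg F⟩ (hG.add hH) (add_fracRatios_subset_join F)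
    _ = etaFrac F G + etaFrac F H :=
        csInf_add hG ⟨0, fracRatios_nonneg F⟩ hH ⟨0, fracRatios_nonneg F⟩

/-- The fractional `F`-number is subadditive under joins. -/
theorem etaFrac_join_subadditive (F : SemiringFamily.{u}) {α : Type v} {β : Type w}
    [Fintype α] [Fintype β] (G : SimpleGraph α) (H : SimpleGraph β) :
    etaFrac F (graphJoin G H) ≤ etaFrac F G + etaFrac F H :=
  etaFrac_join_subadditive_general F G H
end
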